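/- Let (R,M) be a ΣPIR (an infinite special principal ideal ring), let 1 < p < n be integers, and let φ : R^p → R^n be an injective R-algebra homomorphism. If n = p + 1, then the extension φ has FIP (there are only finitely many R-subalgebras of R^n containing φ(R^p)). If n ≥ 2p + 1, then the extension φ does not have FIP. -/

import Mathlib

/-!
An SPIR `(R, M)` is local, so `R` has no idempotents other than `0` and `1`. Hence every
`R`-algebra map `R^p → R^n` is `x ↦ x ∘ σ` for a map `σ : n → p`, surjective when the map is
injective, and its image consists of the functions constant on the fibres of `σ`.

If `n = p + 1`, exactly one fibre has two points `i, j`, and the image is the kernel of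
`y ↦ y i - y j`. A subalgebra containing that kernel is determined by its image in `R`, an ideal,
and the ideals of an SPIR are the finitely many powers of `M`.

If `n ≥ 2p + 1`, some fibre has three points, and pulling back along the projection onto these
coordinates embeds the subalgebras of `R³` into the subalgebras containing the image. For
`m ≠ 0` with `m² = 0`, the subalgebras `R (1, 1, 1) + R (0, m, r m)` of `R³` are pairwise
distinct for `r` in distinct classes mod `M`, and `R/M` is infinite because `R`, filtered by the
powers of `M`, would otherwise be finite.
-/

/-- `(R, M)` is a special principal ideal ring (SPIR): a principal ideal ring, not a field,
whose unique nonzero prime ideal is `M`, with `M` nilpotent. -/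
def IsSPIR (R : Type*) [CommRing R] (M : Ideal R) : Prop :=
  IsPrincipalIdealRing R ∧ ¬ IsField R ∧ M.IsPrime ∧ M ≠ ⊥ ∧
    (∀ P : Ideal R, P.IsPrime → P ≠ ⊥ → P = M) ∧ ∃ p : ℕ, 0 < p ∧ M ^ p = ⊥

open Function IsLocalRing

section Combinatorics

variable {ι κ : Type*} [Fintype ι] [Fintype κ]

theorem Fintype.exists_ne_map_eq_injOn_compl {σ : ι → κ} (hσ : Surjective σ)
    (hcard : Fintype.card ι = Fintype.card κ + 1) :
    ∃ i j, i ≠ j ∧ σ i = σ j ∧ Set.InjOn σ {j}ᶜ := by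
  classical
  obtain ⟨i, j, hij, hσij⟩ := Fintype.exists_ne_map_eq_of_card_lt σ (by omega)
  refine ⟨i, j, hij, hσij, ?_⟩
  have hsurjOn : Set.SurjOn σ ↑(Finset.univ.erase j) ↑(Finset.univ : Finset κ) := by
    intro y _
    obtain ⟨x, rfl⟩ := hσ y
    rcases eq_or_ne x j with rfl | hx
    · exact ⟨i, by simpa using hij, hσij⟩
    · exact ⟨x, by simpa using hx, rfl⟩
  simpa [Set.compl_eq_univ_sdiff] using Finset.injOn_of_surjOn_of_card_le σ
    (fun _ _ ↦ Finset.mem_coe.2 (Finset.mem_univ _)) hsurjOn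
    (by simp [Finset.card_erase_of_mem, hcard])

theorem Fintype.exists_embedding_map_eq (σ : ι → κ) {k : ℕ}
    (hk : Fintype.card κ * k < Fintype.card ι) :
    ∃ (e : Fin (k + 1) ↪ ι) (y : κ), ∀ a, σ (e a) = y := by
  classical
  obtain ⟨y, hy⟩ := Fintype.exists_lt_card_fiber_of_mul_lt_card σ hk
  obtain ⟨f⟩ := Embedding.nonempty_of_card_le
    (α := Fin (k + 1)) (β := {x // σ x = y}) (by simpa [Fintype.card_subtype] using hy)
  exact ⟨f.trans (Embedding.subtype _), y, fun a ↦ (f a).2⟩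

end Combinatorics

theorem IsLocalRing.eq_zero_or_eq_one_of_isIdempotentElem {R : Type*} [CommRing R]
    [IsLocalRing R] {e : R} (he : IsIdempotentElem e) : e = 0 ∨ e = 1 := by
  rcases isUnit_or_isUnit_one_sub_self e with h | h
  · exact Or.inr (h.mul_left_cancel (by rw [he.eq, mul_one]))
  · exact Or.inl (h.mul_right_eq_zero.1 (by rw [sub_mul, one_mul, he.eq, sub_self]))

section PiAlgHom

variable {R : Type*} [CommRing R] (hR : ∀ e : R, IsIdempotentElem e → e = 0 ∨ e = 1)
include hR

theorem AlgHom.exists_eq_apply_of_pi [Nontrivial R] {κ : Type*} [Fintype κ]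
    (ψ : (κ → R) →ₐ[R] R) : ∃ i, ∀ x, ψ x = x i := by
  classical
  obtain ⟨i, hi⟩ : ∃ i, ψ (Pi.single i 1) = 1 := by
    by_contra! h
    have hzero : ∀ i, ψ (Pi.single i 1) = 0 := fun i ↦
      (hR _ (by rw [IsIdempotentElem, ← map_mul, ← Pi.single_mul, one_mul])).resolve_right (h i)
    apply one_ne_zero (α := R)
    rw [← map_one ψ, ← Finset.univ_sum_single (1 : κ → R), map_sum]
    simp [hzero]
  refine ⟨i, fun x ↦ ?_⟩
  calc ψ x = ψ (x * Pi.single i 1) := by rw [map_mul, hi, mul_one]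
    _ = ψ (x i • Pi.single i 1) := by congr 1; ext j; by_cases hj : j = i <;> simp [hj]
    _ = x i := by rw [map_smul, hi, smul_eq_mul, mul_one]

theorem AlgHom.exists_surjective_eq_comp_of_injective [Nontrivial R] {ι κ : Type*} [Fintype κ]
    (φ : (κ → R) →ₐ[R] (ι → R)) (hφ : Injective φ) :
    ∃ σ : ι → κ, Surjective σ ∧ ∀ x, φ x = x ∘ σ := by
  choose σ hσ using fun j ↦ ((Pi.evalAlgHom R (fun _ ↦ R) j).comp φ).exists_eq_apply_of_pi hR
  have hφσ : ⇑φ = (· ∘ σ) := funext fun x ↦ funext fun j ↦ hσ j x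
  exact ⟨σ, injective_comp_right_iff_surjective.1 (hφσ ▸ hφ), fun x ↦ congrFun hφσ x⟩

end PiAlgHom

section Overalgebras

variable {R A : Type*} [CommRing R] [Ring A] [Algebra R A] {S : Subalgebra R A}

theorem Subalgebra.finite_le_of_ker_le {W : Type*} [AddCommGroup W] [Module R W]
    [Finite (Submodule R W)] (L : A →ₗ[R] W) (hL : LinearMap.ker L ≤ Subalgebra.toSubmodule S) :
    Finite {T : Subalgebra R A // S ≤ T} := by
  refine Finite.of_injective (fun T ↦ (Subalgebra.toSubmodule T.1).map L) fun T T' hTT' ↦ ?_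
  have hker : ∀ T : {T : Subalgebra R A // S ≤ T}, LinearMap.ker L ≤ Subalgebra.toSubmodule T.1 :=
    fun T ↦ hL.trans (Subalgebra.toSubmodule.monotone T.2)
  have := congrArg (Submodule.comap L) hTT'
  simp only [Submodule.comap_map_eq, sup_eq_left.2 (hker T), sup_eq_left.2 (hker T')] at this
  exact Subtype.ext (Subalgebra.toSubmodule_injective this)

theorem Subalgebra.infinite_le_of_surjective {B : Type*} [Ring B] [Algebra R B]
    [Infinite (Subalgebra R B)] (π : A →ₐ[R] B) (hπ : Surjective π)
    (hS : S ≤ (⊥ : Subalgebra R B).comap π) : Infinite {T : Subalgebra R A // S ≤ T} :=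
  Infinite.of_injective
    (fun U : Subalgebra R B ↦ ⟨U.comap π, hS.trans fun _ hx ↦ bot_le (a := U) hx⟩) fun U U' h ↦ by
    rw [← Subalgebra.map_comap_eq_self_of_surjective hπ U,
      ← Subalgebra.map_comap_eq_self_of_surjective hπ U']
    exact congrArg (fun T : {T : Subalgebra R A // S ≤ T} ↦ T.1.map π) h

end Overalgebras

section SquareZero

variable {R A : Type*} [CommRing R] [CommRing A] [Algebra R A]

/-- The subalgebra `R[v] = R + R v` generated by an element `v` of square zero. -/
def Subalgebra.ofMulSelfEqZero (v : A) (hv : v * v = 0) : Subalgebra R A :=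
  (Submodule.span R {1, v}).toSubalgebra (Submodule.subset_span (by simp)) fun x y hx hy ↦ by
    obtain ⟨a, b, rfl⟩ := Submodule.mem_span_pair.1 hx
    obtain ⟨c, d, rfl⟩ := Submodule.mem_span_pair.1 hy
    refine Submodule.mem_span_pair.2 ⟨a * c, a * d + b * c, ?_⟩
    simp only [Algebra.smul_def, mul_one, map_mul, map_add]
    linear_combination -(algebraMap R A b * algebraMap R A d) * hv

theorem Subalgebra.mem_ofMulSelfEqZero {v : A} (hv : v * v = 0) {x : A} :
    x ∈ Subalgebra.ofMulSelfEqZero (R := R) v hv ↔ ∃ a c : R, a • 1 + c • v = x :=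
  Submodule.mem_span_pair

end SquareZero

namespace IsLocalRing

variable {R : Type*} [CommRing R] [IsLocalRing R]

theorem mem_maximalIdeal_of_mul_eq_zero {r m : R} (hm : m ≠ 0) (h : r * m = 0) :
    r ∈ maximalIdeal R :=
  fun hr ↦ hm (hr.mul_right_eq_zero.1 h)

theorem infinite_subalgebra_pi_fin_three [Infinite (ResidueField R)] {m : R} (hm0 : m ≠ 0)
    (hm : m * m = 0) : Infinite (Subalgebra R (Fin 3 → R)) := by
  let v : R → Fin 3 → R := fun r ↦ ![0, m, r * m]
  have hv : ∀ r, v r * v r = 0 := fun r ↦ by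
    ext s; fin_cases s <;> simp [v, hm, mul_mul_mul_comm r m r m]
  let U : R → Subalgebra R (Fin 3 → R) := fun r ↦ Subalgebra.ofMulSelfEqZero (v r) (hv r)
  have hU : ∀ r r', U r = U r' → residue R r = residue R r' := by
    intro r r' h
    have hmem : v r ∈ U r' := h ▸ (Subalgebra.mem_ofMulSelfEqZero (hv r)).2 ⟨0, 1, by simp⟩
    obtain ⟨a, c, hac⟩ := (Subalgebra.mem_ofMulSelfEqZero (hv r')).1 hmem
    have h0 : a = 0 := by simpa [v] using congrFun hac 0
    have h1 : c * m = m := by simpa [v, h0] using congrFun hac 1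
    have h2 : c * (r' * m) = r * m := by simpa [v, h0] using congrFun hac 2
    refine (Ideal.Quotient.eq).2 (mem_maximalIdeal_of_mul_eq_zero hm0 ?_)
    linear_combination -h2 + r' * h1
  exact Infinite.of_injective (U ∘ surjInv residue_surjective) fun b b' h ↦ by
    simpa only [surjInv_eq] using hU _ _ h

theorem eq_maximalIdeal_pow_of_le_of_not_le (hM : (maximalIdeal R).IsPrincipal) {I : Ideal R}
    {k : ℕ} (hle : I ≤ maximalIdeal R ^ k) (hnle : ¬ I ≤ maximalIdeal R ^ (k + 1)) :
    I = maximalIdeal R ^ k := by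
  obtain ⟨t, ht⟩ := hM
  have hpow : ∀ j, maximalIdeal R ^ j = Ideal.span {t ^ j} := fun j ↦ by
    rw [ht, Ideal.submodule_span_eq, Ideal.span_singleton_pow]
  refine le_antisymm hle ?_
  obtain ⟨a, haI, ha⟩ := Set.not_subset.1 hnle
  obtain ⟨c, rfl⟩ := Ideal.mem_span_singleton'.1 (hpow k ▸ hle haI)
  have hc : IsUnit c := by
    by_contra hc
    rw [pow_succ'] at ha
    exact ha (Ideal.mul_mem_mul ((mem_maximalIdeal c).2 hc)
      (hpow k ▸ Ideal.mem_span_singleton_self _))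
  rw [hpow, Ideal.span_singleton_le_iff_mem, ← hc.unit.inv_mul_cancel_left (t ^ k)]
  exact I.mul_mem_left _ haI

theorem exists_eq_maximalIdeal_pow (hM : (maximalIdeal R).IsPrincipal) {e : ℕ}
    (he : maximalIdeal R ^ e = ⊥) (I : Ideal R) : ∃ k ≤ e, I = maximalIdeal R ^ k := by
  by_contra! hI
  have hle : ∀ k ≤ e, I ≤ maximalIdeal R ^ k := by
    intro k hk
    induction k with
    | zero => simp
    | succ k ih =>
      by_contra hnle
      exact hI k (by omega) (eq_maximalIdeal_pow_of_le_of_not_le hM (ih (by omega)) hnle)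
  exact hI e le_rfl (le_antisymm (hle e le_rfl) (he ▸ bot_le))

theorem finite_ideal_of_isPrincipal (hM : (maximalIdeal R).IsPrincipal) {e : ℕ}
    (he : maximalIdeal R ^ e = ⊥) : Finite (Ideal R) :=
  Finite.of_surjective (fun k : Fin (e + 1) ↦ maximalIdeal R ^ (k : ℕ)) fun I ↦ by
    obtain ⟨k, hk, rfl⟩ := exists_eq_maximalIdeal_pow hM he I
    exact ⟨⟨k, by omega⟩, rfl⟩

theorem infinite_residueField [IsNoetherianRing R] [Infinite R] {e : ℕ}
    (he : maximalIdeal R ^ e = ⊥) : Infinite (ResidueField R) := by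
  by_contra hfin
  have : Finite (ResidueField R) := not_infinite_iff_finite.1 hfin
  have : Finite (R ⧸ (⊥ : Ideal R)) := finite_quotient_iff.2 ⟨e, he.le⟩
  have : Finite R := .of_equiv _ (RingEquiv.quotientBot R).toEquiv
  exact not_finite R

end IsLocalRing

namespace IsSPIR

variable {R : Type*} [CommRing R] {M : Ideal R}

theorem isLocalRing (h : IsSPIR R M) : IsLocalRing R := by
  obtain ⟨-, hnf, hMp, -, huniq, -⟩ := h
  have : Nontrivial R :=
    nontrivial_of_ne 0 1 fun h01 ↦ (Ideal.ne_top_iff_one M).1 hMp.ne_top (h01 ▸ M.zero_mem)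
  have hmax : ∀ P : Ideal R, P.IsMaximal → P = M := fun P hP ↦
    huniq P hP.isPrime (Ring.ne_bot_of_isMaximal_of_not_isField hP hnf)
  obtain ⟨P, hP⟩ := Ideal.exists_maximal R
  exact .of_unique_max_ideal ⟨M, hmax P hP ▸ hP, hmax⟩

theorem eq_maximalIdeal [IsLocalRing R] (h : IsSPIR R M) : M = maximalIdeal R := by
  obtain ⟨-, hnf, -, -, huniq, -⟩ := h
  have hmax := maximalIdeal.isMaximal R
  exact (huniq _ hmax.isPrime (Ring.ne_bot_of_isMaximal_of_not_isField hmax hnf)).symm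

theorem maximalIdeal_pow_eq_bot [IsLocalRing R] (h : IsSPIR R M) :
    ∃ e, maximalIdeal R ^ e = ⊥ := by
  obtain ⟨e, -, he⟩ := h.2.2.2.2.2
  exact ⟨e, h.eq_maximalIdeal ▸ he⟩

theorem finite_ideal [IsLocalRing R] (h : IsSPIR R M) : Finite (Ideal R) := by
  have := h.1
  obtain ⟨e, he⟩ := h.maximalIdeal_pow_eq_bot
  exact finite_ideal_of_isPrincipal (IsPrincipalIdealRing.principal _) he

theorem infinite_residueField [IsLocalRing R] [Infinite R] (h : IsSPIR R M) :
    Infinite (ResidueField R) := by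
  have := h.1
  obtain ⟨e, he⟩ := h.maximalIdeal_pow_eq_bot
  exact IsLocalRing.infinite_residueField he

theorem exists_ne_zero_mul_self_eq_zero (h : IsSPIR R M) : ∃ m : R, m ≠ 0 ∧ m * m = 0 := by
  obtain ⟨-, -, -, hM0, -, e, -, he⟩ := h
  obtain ⟨t, htM, ht0⟩ := Submodule.exists_mem_ne_zero_of_ne_bot hM0
  have : ¬ IsReduced R := fun _ ↦
    ht0 (IsReduced.eq_zero t ⟨e, by simpa [he] using Ideal.pow_mem_pow htM e⟩)
  simpa [isReduced_iff_pow_one_lt 2 one_lt_two, sq, and_comm] using this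

end IsSPIR

section Precomposition

variable {R ι κ : Type*} [CommRing R] (φ : (κ → R) →ₐ[R] (ι → R)) {σ : ι → κ}
  (hσ : ∀ x, φ x = x ∘ σ)
include hσ

theorem finite_subalgebra_le_of_card_eq_succ [Fintype ι] [Fintype κ] [Finite (Ideal R)]
    (hsurj : Surjective σ) (hcard : Fintype.card ι = Fintype.card κ + 1) :
    Finite {T : Subalgebra R (ι → R) // φ.range ≤ T} := by
  obtain ⟨i, j, hij, hσij, hinj⟩ := Fintype.exists_ne_map_eq_injOn_compl hsurj hcard
  let L : (ι → R) →ₗ[R] R := LinearMap.proj (R := R) (φ := fun _ ↦ R) i - LinearMap.proj j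
  refine Subalgebra.finite_le_of_ker_le L fun y hy ↦ ?_
  replace hy : y i = y j := sub_eq_zero.1 hy
  have hfiber : ∀ a, σ a = σ j → y a = y j := fun a ha ↦ by
    rcases eq_or_ne a j with rfl | haj
    · rfl
    · rw [hinj haj hij (ha.trans hσij.symm), hy]
  have hfactors : y.FactorsThrough σ := fun a b hab ↦ by
    rcases eq_or_ne a j with rfl | haj
    · exact (hfiber b hab.symm).symm
    rcases eq_or_ne b j with rfl | hbj
    · exact hfiber a hab
    · rw [hinj haj hbj hab]
  exact ⟨extend σ y (0 : κ → R), (hσ _).trans (hfactors.extend_comp (0 : κ → R))⟩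

theorem infinite_subalgebra_le_of_embedding_map_eq {ι' : Type*}
    [Infinite (Subalgebra R (ι' → R))] (e : ι' ↪ ι) {k : κ} (he : ∀ a, σ (e a) = k) :
    Infinite {T : Subalgebra R (ι → R) // φ.range ≤ T} := by
  let π : (ι → R) →ₐ[R] (ι' → R) := AlgHom.pi fun a ↦ Pi.evalAlgHom R _ (e a)
  refine Subalgebra.infinite_le_of_surjective π (fun z ↦ ⟨extend e z 0, ?_⟩) ?_
  · exact funext fun a ↦ e.injective.extend_apply z 0 a
  · rintro _ ⟨x, rfl⟩
    exact ⟨x k, funext fun a ↦ by simp [π, hσ, he]⟩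

end Precomposition

theorem fip_power_extension_sigma_pir_general (R : Type*) [CommRing R] (M : Ideal R)
    (hspir : IsSPIR R M) (hinf : Infinite R) (p n : ℕ)
    (φ : (Fin p → R) →ₐ[R] (Fin n → R)) (hφ : Function.Injective φ) :
    (n = p + 1 → Finite {T : Subalgebra R (Fin n → R) // φ.range ≤ T}) ∧
      (2 * p + 1 ≤ n → ¬ Finite {T : Subalgebra R (Fin n → R) // φ.range ≤ T}) := by
  have := hspir.isLocalRing
  have := hspir.finite_ideal
  obtain ⟨σ, hsurj, hσ⟩ := φ.exists_surjective_eq_comp_of_injective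
    (fun _ ↦ eq_zero_or_eq_one_of_isIdempotentElem) hφ
  refine ⟨fun hn ↦ finite_subalgebra_le_of_card_eq_succ φ hσ hsurj (by simp [hn]), fun hn ↦ ?_⟩
  obtain ⟨e, k, he⟩ :=
    Fintype.exists_embedding_map_eq σ (k := 2) (by simp only [Fintype.card_fin]; omega)
  obtain ⟨m, hm0, hm⟩ := hspir.exists_ne_zero_mul_self_eq_zero
  have := hspir.infinite_residueField
  have := infinite_subalgebra_pi_fin_three hm0 hm
  exact not_finite_iff_infinite.2 (infinite_subalgebra_le_of_embedding_map_eq φ hσ e he)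

/-- Let `(R, M)` be a ΣPIR (an infinite SPIR), `1 < p < n`, and `φ : R^p → R^n` an injective
`R`-algebra homomorphism. If `n = p + 1` then the extension `φ` has FIP (the set of
`R`-subalgebras of `R^n` containing `φ(R^p)` is finite); if `n ≥ 2p + 1`, it does not. -/
theorem fip_power_extension_sigma_pir (R : Type*) [CommRing R] (M : Ideal R)
    (hspir : IsSPIR R M) (hinf : Infinite R) (p n : ℕ) (hp : 1 < p) (hpn : p < n)
    (φ : (Fin p → R) →ₐ[R] (Fin n → R)) (hφ : Function.Injective φ) :
    (n = p + 1 → Finite {T : Subalgebra R (Fin n → R) // φ.range ≤ T}) ∧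
      (2 * p + 1 ≤ n → ¬ Finite {T : Subalgebra R (Fin n → R) // φ.range ≤ T}) :=
  fip_power_extension_sigma_pir_general R M hspir hinf p n φ hφ
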